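/- Let U be a finite set and C_1, …, C_m ⊆ U (m ≥ 1) with ⋃_{i=1}^m C_i = U, and let G be the graph of the Maximum Coverage reduction built from this instance. Then for every set S ⊆ I ⊎ U of vertices with 1 ≤ |S| = k ≤ m, there exists a set S′ ⊆ I consisting only of index vertices, with |S′| = k, such that N(S′) ∪ S′ ⊇ N(S) ∪ S, and hence |N(S′)| ≥ |N(S)| (equivalently, the expansion |N(S′)|/|S′| is at least |N(S)|/|S|). (This is the claim in the proof of Proposition 1 that any sample meeting U can be replaced, without loss of expansion, by replacing each element of S ∩ U with one of its neighbors in I.) -/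

import Mathlib

open Finset

/-- The neighborhood `N(S)` of a set of vertices `S`: all vertices outside `S`
adjacent to some vertex of `S`. -/
def nbhd {V : Type*} [Fintype V] [DecidableEq V] (G : SimpleGraph V) [DecidableRel G.Adj]
    (S : Finset V) : Finset V :=
  Finset.univ.filter fun w => w ∉ S ∧ ∃ v ∈ S, G.Adj v w

/-- The graph of the Maximum Coverage reduction: vertex set `I ⊎ U` with
`I = Fin m` a clique of index vertices, `U` an independent set, and an edge
between index vertex `i` and element `u` exactly when `u ∈ C i`. -/
def redGraph {U : Type*} [DecidableEq U] (m : ℕ) (C : Fin m → Finset U) :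
    SimpleGraph (Fin m ⊕ U) where
  Adj x y := match x, y with
    | Sum.inl i, Sum.inl j => i ≠ j
    | Sum.inl i, Sum.inr u => u ∈ C i
    | Sum.inr u, Sum.inl i => u ∈ C i
    | Sum.inr _, Sum.inr _ => False
  symm := by
    refine ⟨?_⟩
    rintro (i | u) (j | w) h
    · exact h.symm
    · exact h
    · exact h
    · exact h
  loopless := by
    refine ⟨?_⟩
    rintro (i | u) h
    · exact h rfl
    · exact h

instance {U : Type*} [DecidableEq U] (m : ℕ) (C : Fin m → Finset U) :
    DecidableRel (redGraph m C).Adj := fun x y =>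
  match x, y with
  | Sum.inl i, Sum.inl j => inferInstanceAs (Decidable (i ≠ j))
  | Sum.inl i, Sum.inr u => inferInstanceAs (Decidable (u ∈ C i))
  | Sum.inr u, Sum.inl i => inferInstanceAs (Decidable (u ∈ C i))
  | Sum.inr _, Sum.inr _ => inferInstanceAs (Decidable False)

/-!
Send every element `u ∈ S ∩ U` to an index `f u` with `u ∈ C (f u)` and complete the resulting
set of at most `k` indices to a set `T` of exactly `k` indices. Every index vertex other than
those of `T` is adjacent to `T` because `I` is a clique, and every element of `U` covered by `S`
(lying in `S` or adjacent to an index vertex of `S`) is adjacent to `T`. So the closed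
neighbourhood `N(T) ∪ T` contains `N(S) ∪ S`; both `S` and `T` have `k` vertices and are
disjoint from their neighbourhoods, hence `|N(S)| ≤ |N(T)|`.
-/

section nbhd

variable {V : Type*} [Fintype V] [DecidableEq V] {G : SimpleGraph V} [DecidableRel G.Adj]
  {S S' : Finset V}

theorem mem_nbhd {w : V} : w ∈ nbhd G S ↔ w ∉ S ∧ ∃ v ∈ S, G.Adj v w := by
  simp [nbhd]

theorem disjoint_nbhd_self : Disjoint (nbhd G S) S :=
  disjoint_left.2 fun _ hw => (mem_nbhd.1 hw).1

theorem card_nbhd_le_of_subset_nbhd_union (hcard : S.card = S'.card)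
    (hsub : nbhd G S ∪ S ⊆ nbhd G S' ∪ S') : (nbhd G S).card ≤ (nbhd G S').card := by
  have := card_le_card hsub
  rw [card_union_of_disjoint disjoint_nbhd_self, card_union_of_disjoint disjoint_nbhd_self,
    hcard] at this
  omega

end nbhd

namespace redGraph

variable {U : Type*} [DecidableEq U] {m : ℕ} {C : Fin m → Finset U}

theorem not_adj_inr_inr {u w : U} : ¬(redGraph m C).Adj (.inr u) (.inr w) :=
  id

variable [Fintype U]

theorem inl_mem_nbhd_union_of_nonempty {T : Finset (Fin m)} (hT : T.Nonempty) (j : Fin m) :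
    .inl j ∈ nbhd (redGraph m C) (T.image .inl) ∪ T.image .inl := by
  by_cases hj : j ∈ T
  · exact mem_union_right _ (mem_image_of_mem _ hj)
  · obtain ⟨i, hi⟩ := hT
    refine mem_union_left _ (mem_nbhd.2 ⟨by simpa using hj, .inl i, mem_image_of_mem _ hi, ?_⟩)
    rintro rfl
    exact hj hi

theorem inr_mem_nbhd_union_of_mem {T : Finset (Fin m)} {u : U} {i : Fin m} (hi : i ∈ T)
    (hu : u ∈ C i) : .inr u ∈ nbhd (redGraph m C) (T.image .inl) ∪ T.image .inl :=
  mem_union_left _ (mem_nbhd.2 ⟨by simp, .inl i, mem_image_of_mem _ hi, hu⟩)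

theorem nbhd_union_subset_of_image_subset {f : U → Fin m} (hf : ∀ u, u ∈ C (f u))
    {S : Finset (Fin m ⊕ U)} {T : Finset (Fin m)} (hST : S.image (Sum.elim id f) ⊆ T) :
    nbhd (redGraph m C) S ∪ S ⊆ nbhd (redGraph m C) (T.image .inl) ∪ T.image .inl := by
  have hmemT : ∀ x ∈ S, Sum.elim id f x ∈ T := fun x hx => hST (mem_image_of_mem _ hx)
  intro x hx
  have hS : S.Nonempty := by
    rcases mem_union.1 hx with hx | hx
    · obtain ⟨-, v, hv, -⟩ := mem_nbhd.1 hx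
      exact ⟨v, hv⟩
    · exact ⟨x, hx⟩
  rcases x with j | u
  · exact inl_mem_nbhd_union_of_nonempty ((hS.image _).mono hST) j
  · rcases mem_union.1 hx with hx | hx
    · obtain ⟨-, v, hv, hadj⟩ := mem_nbhd.1 hx
      rcases v with i | w
      · exact inr_mem_nbhd_union_of_mem (hmemT _ hv) hadj
      · exact absurd hadj not_adj_inr_inr
    · exact inr_mem_nbhd_union_of_mem (hmemT _ hx) (hf u)

end redGraph

theorem reduction_replace_general {U : Type*} [Fintype U] [DecidableEq U]
    (m k : ℕ) (C : Fin m → Finset U)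
    (hU : ∀ u : U, ∃ i : Fin m, u ∈ C i)
    (S : Finset (Fin m ⊕ U)) (hS : S.card = k) (hkm : k ≤ m) :
    ∃ T : Finset (Fin m), T.card = k ∧
      nbhd (redGraph m C) S ∪ S ⊆
        nbhd (redGraph m C) (T.image Sum.inl) ∪ T.image Sum.inl ∧
      (nbhd (redGraph m C) S).card ≤ (nbhd (redGraph m C) (T.image Sum.inl)).card := by
  choose f hf using hU
  obtain ⟨T, hST, hT⟩ := exists_superset_card_eq
    (hS ▸ card_image_le : (S.image (Sum.elim id f)).card ≤ k) (by simpa using hkm)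
  have hsub := redGraph.nbhd_union_subset_of_image_subset hf hST
  refine ⟨T, hT, hsub, card_nbhd_le_of_subset_nbhd_union ?_ hsub⟩
  rw [card_image_of_injective _ Sum.inl_injective, hS, hT]

/-- **Replacement step in the proof of Proposition 1.** Any sample `S` of the reduction
graph with `1 ≤ |S| = k ≤ m` can be replaced by a set `S' = T.image Sum.inl` of `k` index
vertices whose closed coverage `N(S') ∪ S'` contains `N(S) ∪ S`, and hence
`|N(S')| ≥ |N(S)|`. -/
theorem reduction_replace {U : Type*} [Fintype U] [DecidableEq U]
    (m k : ℕ) (hm : 1 ≤ m) (C : Fin m → Finset U)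
    (hU : ∀ u : U, ∃ i : Fin m, u ∈ C i)
    (S : Finset (Fin m ⊕ U)) (hk : 1 ≤ k) (hS : S.card = k) (hkm : k ≤ m) :
    ∃ T : Finset (Fin m), T.card = k ∧
      nbhd (redGraph m C) S ∪ S ⊆
        nbhd (redGraph m C) (T.image Sum.inl) ∪ T.image Sum.inl ∧
      (nbhd (redGraph m C) S).card ≤ (nbhd (redGraph m C) (T.image Sum.inl)).card :=
  reduction_replace_general m k C hU S hS hkm
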